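/- (Legendre relation) For all k ∈ (0,1), with k′ = √(1−k²), one has E(k)K(k′) + E(k′)K(k) − K(k)K(k′) = π/2, where K and E are the complete elliptic integrals of the first and second kind. -/

import Mathlib

open Real

/-- The complete elliptic integral of the first kind. -/
noncomputable def ellipticK (k : ℝ) : ℝ :=
  ∫ t in (0:ℝ)..1, 1 / Real.sqrt ((1 - t ^ 2) * (1 - k ^ 2 * t ^ 2))

/-- The complete elliptic integral of the second kind. -/
noncomputable def ellipticE (k : ℝ) : ℝ :=
  ∫ t in (0:ℝ)..1, Real.sqrt ((1 - k ^ 2 * t ^ 2) / (1 - t ^ 2))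

/-- The ratio of elliptic integrals with complementary modulus. -/
noncomputable def xRatio (k : ℝ) : ℝ :=
  ellipticK (Real.sqrt (1 - k ^ 2)) / ellipticK k

/-! Substituting `t = sin θ` writes `K` and `E` as the integrals of `Δ⁻¹` and `Δ` over
`[0, π/2]`, where `Δ(θ) = √(1 - k² sin² θ)` is smooth and positive for `|k| < 1`, so both may be
differentiated under the integral sign: `k E' = E - K` and `k (1 - k²) K' = E - (1 - k²) K`, the
latter because the remaining integrand is the `θ`-derivative of `sin θ cos θ / Δ`, which vanishes
at both ends. With
`k' = √(1 - k²)` these make the derivative of `L(k) = E(k) K(k') + E(k') K(k) - K(k) K(k')`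
vanish on `(0, 1)`. As `k → 0⁺`, `E(k') → E(1) = 1` and `K(k) → π/2`, while
`|E(k) - K(k)| ≤ k² K(k)` and `K(k') ≤ π/(2k)` give `(E(k) - K(k)) K(k') → 0`; hence `L = π/2`. -/

open Set Filter Topology MeasureTheory

theorem image_sin_Ioo_zero_pi_div_two : sin '' Ioo 0 (π / 2) = Ioo 0 1 := by
  ext t
  refine ⟨?_, fun ht => ⟨arcsin t, ⟨arcsin_pos.2 ht.1, arcsin_lt_pi_div_two.2 ht.2⟩,
    sin_arcsin (by linarith [ht.1]) ht.2.le⟩⟩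
  rintro ⟨θ, hθ, rfl⟩
  refine ⟨sin_pos_of_pos_of_lt_pi hθ.1 (by linarith [hθ.2, pi_pos]), ?_⟩
  simpa using strictMonoOn_sin ⟨by linarith [hθ.1, pi_pos], hθ.2.le⟩
    ⟨by linarith [pi_pos], le_rfl⟩ hθ.2

section
variable {E : Type*} [NormedAddCommGroup E] [NormedSpace ℝ E]

theorem integral_zero_one_eq_of_sin_substitution {f g : ℝ → E}
    (h : ∀ θ ∈ Ioo 0 (π / 2), cos θ • f (sin θ) = g θ) :
    ∫ t in (0:ℝ)..1, f t = ∫ θ in (0:ℝ)..π / 2, g θ := by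
  have hIoo : Ioo 0 (π / 2) ⊆ Icc (-(π / 2)) (π / 2) :=
    fun θ hθ => ⟨by linarith [hθ.1, pi_pos], hθ.2.le⟩
  rw [intervalIntegral.integral_of_le zero_le_one, intervalIntegral.integral_of_le (by positivity),
    integral_Ioc_eq_integral_Ioo, integral_Ioc_eq_integral_Ioo, ← image_sin_Ioo_zero_pi_div_two,
    integral_image_eq_integral_abs_deriv_smul measurableSet_Ioo
      (fun θ _ => (hasDerivAt_sin θ).hasDerivWithinAt) (injOn_sin.mono hIoo)]
  refine setIntegral_congr_fun measurableSet_Ioo fun θ hθ => ?_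
  rw [abs_of_pos (cos_pos_of_mem_Ioo ⟨by linarith [hθ.1, pi_pos], hθ.2⟩), h θ hθ]

theorem hasDerivAt_intervalIntegral_of_continuousOn {F F' : ℝ → ℝ → E} {U : Set ℝ} {x₀ a b : ℝ}
    (hU : IsOpen U) (hx₀ : x₀ ∈ U) (hF : ∀ x ∈ U, Continuous (F x))
    (hF' : ContinuousOn (Function.uncurry F') (U ×ˢ univ))
    (hderiv : ∀ x ∈ U, ∀ t, HasDerivAt (F · t) (F' x t) x) :
    HasDerivAt (fun x => ∫ t in a..b, F x t) (∫ t in a..b, F' x₀ t) x₀ := by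
  obtain ⟨ε, hε, hball⟩ := Metric.isOpen_iff.1 hU x₀ hx₀
  have hsub : Metric.closedBall x₀ (ε / 2) ⊆ U :=
    (Metric.closedBall_subset_ball (half_lt_self hε)).trans hball
  obtain ⟨C, hC⟩ := ((isCompact_closedBall x₀ (ε / 2)).prod isCompact_uIcc)
    |>.exists_bound_of_continuousOn (hF'.mono (prod_mono hsub (subset_univ (uIcc a b))))
  refine (intervalIntegral.hasDerivAt_integral_of_dominated_loc_of_deriv_le (bound := fun _ => C)
    (Metric.ball_mem_nhds x₀ (half_pos hε))
    (eventually_of_mem (hU.mem_nhds hx₀) fun x hx => (hF x hx).aestronglyMeasurable)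
    ((hF x₀ hx₀).intervalIntegrable a b)
    (hF'.comp_continuous (continuous_const.prodMk continuous_id)
      fun t => ⟨hx₀, mem_univ t⟩).aestronglyMeasurable
    (ae_of_all _ fun t ht x hx =>
      hC (x, t) (mk_mem_prod (Metric.ball_subset_closedBall hx) (uIoc_subset_uIcc ht)))
    intervalIntegrable_const
    (ae_of_all _ fun t _ x hx => hderiv x (hsub (Metric.ball_subset_closedBall hx)) t)).2

end

noncomputable def ellipticDelta (k θ : ℝ) : ℝ := √(1 - k ^ 2 * sin θ ^ 2)

@[fun_prop]
theorem Continuous.ellipticDelta {α : Type*} [TopologicalSpace α] {f g : α → ℝ}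
    (hf : Continuous f) (hg : Continuous g) : Continuous fun x => ellipticDelta (f x) (g x) := by
  unfold _root_.ellipticDelta; fun_prop

section
variable {k : ℝ}

theorem ellipticDelta_sq (hk : |k| ≤ 1) (θ : ℝ) : ellipticDelta k θ ^ 2 = 1 - k ^ 2 * sin θ ^ 2 :=
  sq_sqrt (by nlinarith [sin_sq_le_one θ, (sq_le_one_iff_abs_le_one k).2 hk, sq_nonneg (sin θ)])

theorem ellipticDelta_pos (hk : |k| < 1) (θ : ℝ) : 0 < ellipticDelta k θ := by
  have hk2 : k ^ 2 < 1 := (sq_lt_one_iff_abs_lt_one k).2 hk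
  exact sqrt_pos.2 (by nlinarith [sin_sq_le_one θ, sq_nonneg k, sq_nonneg (sin θ)])

theorem ellipticDelta_le_one (θ : ℝ) : ellipticDelta k θ ≤ 1 :=
  sqrt_le_one.2 (by nlinarith [sq_nonneg k, sq_nonneg (sin θ)])

theorem sqrt_one_sub_sq_le_ellipticDelta (θ : ℝ) : √(1 - k ^ 2) ≤ ellipticDelta k θ :=
  sqrt_le_sqrt (by nlinarith [sin_sq_le_one θ, sq_nonneg k])

theorem continuous_inv_ellipticDelta (hk : |k| < 1) : Continuous fun θ => (ellipticDelta k θ)⁻¹ :=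
  (by fun_prop : Continuous (ellipticDelta k)).inv₀ fun θ => (ellipticDelta_pos hk θ).ne'

theorem hasDerivAt_ellipticDelta (hk : |k| < 1) (θ : ℝ) :
    HasDerivAt (ellipticDelta · θ) (-(k * sin θ ^ 2) / ellipticDelta k θ) k := by
  have hΔ := ellipticDelta_pos hk θ
  refine (((hasDerivAt_pow 2 k).mul_const (sin θ ^ 2)).const_sub 1).sqrt
    (sqrt_pos.1 hΔ).ne' |>.congr_deriv ?_
  rw [← ellipticDelta]
  field_simp
  ring

theorem hasDerivAt_sin_mul_cos_div_ellipticDelta (hk : |k| < 1) (θ : ℝ) :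
    HasDerivAt (fun φ => sin φ * cos φ / ellipticDelta k φ)
      ((1 - 2 * sin θ ^ 2 + k ^ 2 * sin θ ^ 4) / ellipticDelta k θ ^ 3) θ := by
  have hΔ := ellipticDelta_pos hk θ
  have hΔθ : HasDerivAt (ellipticDelta k) (-(k ^ 2 * sin θ * cos θ) / ellipticDelta k θ) θ := by
    refine ((((hasDerivAt_sin θ).pow 2).const_mul (k ^ 2)).const_sub 1).sqrt
      (sqrt_pos.1 hΔ).ne' |>.congr_deriv ?_
    rw [Pi.pow_apply, ← ellipticDelta]
    field_simp
    ring
  refine (((hasDerivAt_sin θ).fun_mul (hasDerivAt_cos θ)).div hΔθ hΔ.ne').congr_deriv ?_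
  field_simp
  linear_combination (cos θ ^ 2 - sin θ ^ 2) * ellipticDelta_sq hk.le θ + cos_sq' θ

theorem ellipticK_eq_integral_ellipticDelta (k : ℝ) :
    ellipticK k = ∫ θ in (0:ℝ)..π / 2, (ellipticDelta k θ)⁻¹ := by
  refine integral_zero_one_eq_of_sin_substitution fun θ hθ => ?_
  have hcos : 0 < cos θ := cos_pos_of_mem_Ioo ⟨by linarith [hθ.1, pi_pos], hθ.2⟩
  rw [smul_eq_mul, ellipticDelta, ← cos_sq', sqrt_mul (sq_nonneg _), sqrt_sq hcos.le, one_div,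
    mul_inv, ← mul_assoc, mul_inv_cancel₀ hcos.ne', one_mul]

theorem ellipticE_eq_integral_ellipticDelta (k : ℝ) :
    ellipticE k = ∫ θ in (0:ℝ)..π / 2, ellipticDelta k θ := by
  refine integral_zero_one_eq_of_sin_substitution fun θ hθ => ?_
  have hcos : 0 < cos θ := cos_pos_of_mem_Ioo ⟨by linarith [hθ.1, pi_pos], hθ.2⟩
  rw [smul_eq_mul, ellipticDelta, ← cos_sq', sqrt_div' _ (sq_nonneg _), sqrt_sq hcos.le,
    mul_div_cancel₀ _ hcos.ne']

theorem continuous_ellipticE : Continuous ellipticE := by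
  simpa only [← funext ellipticE_eq_integral_ellipticDelta] using
    intervalIntegral.continuous_parametric_intervalIntegral_of_continuous' (μ := volume)
      (f := ellipticDelta) (by fun_prop) 0 (π / 2)

theorem ellipticE_one : ellipticE 1 = 1 := by
  rw [ellipticE_eq_integral_ellipticDelta, intervalIntegral.integral_congr (g := cos), integral_cos]
  · simp
  intro θ hθ
  rw [uIcc_of_le (by positivity)] at hθ
  rw [ellipticDelta, one_pow, one_mul, ← cos_sq',
    sqrt_sq (cos_nonneg_of_mem_Icc ⟨by linarith [hθ.1, pi_pos], hθ.2⟩)]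

theorem ellipticK_zero : ellipticK 0 = π / 2 := by
  simp [ellipticK_eq_integral_ellipticDelta, ellipticDelta]

theorem ellipticK_nonneg (k : ℝ) : 0 ≤ ellipticK k := by
  rw [ellipticK_eq_integral_ellipticDelta]
  exact intervalIntegral.integral_nonneg (by positivity) fun θ _ => inv_nonneg.2 (sqrt_nonneg _)

theorem ellipticE_le_ellipticK (hk : |k| < 1) : ellipticE k ≤ ellipticK k := by
  rw [ellipticE_eq_integral_ellipticDelta, ellipticK_eq_integral_ellipticDelta]
  refine intervalIntegral.integral_mono_on (by positivity)
    (Continuous.intervalIntegrable (by fun_prop) _ _)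
    ((continuous_inv_ellipticDelta hk).intervalIntegrable _ _) fun θ _ => ?_
  exact (ellipticDelta_le_one θ).trans
    ((one_le_inv₀ (ellipticDelta_pos hk θ)).2 (ellipticDelta_le_one θ))

theorem one_sub_sq_mul_ellipticK_le_ellipticE (hk : |k| < 1) :
    (1 - k ^ 2) * ellipticK k ≤ ellipticE k := by
  rw [ellipticE_eq_integral_ellipticDelta, ellipticK_eq_integral_ellipticDelta,
    ← intervalIntegral.integral_const_mul]
  refine intervalIntegral.integral_mono_on (by positivity)
    (((continuous_inv_ellipticDelta hk).const_mul _).intervalIntegrable _ _)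
    (Continuous.intervalIntegrable (by fun_prop) _ _) fun θ _ => ?_
  rw [← div_eq_mul_inv, div_le_iff₀ (ellipticDelta_pos hk θ), ← sq, ellipticDelta_sq hk.le]
  nlinarith [sin_sq_le_one θ, sq_nonneg k]

theorem abs_ellipticE_sub_ellipticK_le (hk : |k| < 1) :
    |ellipticE k - ellipticK k| ≤ k ^ 2 * ellipticK k := by
  rw [abs_sub_comm, abs_of_nonneg (sub_nonneg.2 (ellipticE_le_ellipticK hk))]
  linarith [one_sub_sq_mul_ellipticK_le_ellipticE hk]

theorem ellipticK_le_div_sqrt_one_sub_sq (hk : |k| < 1) :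
    ellipticK k ≤ π / (2 * √(1 - k ^ 2)) := by
  have hk' : 0 < √(1 - k ^ 2) := sqrt_pos.2 (by nlinarith [(sq_lt_one_iff_abs_lt_one k).2 hk])
  calc ellipticK k ≤ ∫ θ in (0:ℝ)..π / 2, (√(1 - k ^ 2))⁻¹ := by
        rw [ellipticK_eq_integral_ellipticDelta]
        exact intervalIntegral.integral_mono_on (by positivity)
          ((continuous_inv_ellipticDelta hk).intervalIntegrable _ _) intervalIntegrable_const
          fun θ _ => inv_anti₀ hk' (sqrt_one_sub_sq_le_ellipticDelta θ)
    _ = π / (2 * √(1 - k ^ 2)) := by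
        rw [intervalIntegral.integral_const, smul_eq_mul]
        field_simp
        ring

theorem hasDerivAt_ellipticE_integral (hk : |k| < 1) :
    HasDerivAt ellipticE (∫ θ in (0:ℝ)..π / 2, -(k * sin θ ^ 2) / ellipticDelta k θ) k := by
  rw [funext ellipticE_eq_integral_ellipticDelta]
  exact hasDerivAt_intervalIntegral_of_continuousOn (F := ellipticDelta)
    (F' := fun k θ => -(k * sin θ ^ 2) / ellipticDelta k θ)
    (isOpen_lt continuous_abs continuous_const) hk (fun x _ => by fun_prop)
    (ContinuousOn.div (by fun_prop) (by fun_prop) fun p hp => (ellipticDelta_pos hp.1 p.2).ne')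
    fun x hx => hasDerivAt_ellipticDelta hx

theorem hasDerivAt_ellipticK_integral (hk : |k| < 1) :
    HasDerivAt ellipticK (∫ θ in (0:ℝ)..π / 2, k * sin θ ^ 2 / ellipticDelta k θ ^ 3) k := by
  rw [funext ellipticK_eq_integral_ellipticDelta]
  refine hasDerivAt_intervalIntegral_of_continuousOn (F := fun k θ => (ellipticDelta k θ)⁻¹)
    (F' := fun k θ => k * sin θ ^ 2 / ellipticDelta k θ ^ 3)
    (isOpen_lt continuous_abs continuous_const) hk (fun x hx => continuous_inv_ellipticDelta hx)
    (ContinuousOn.div (by fun_prop) (by fun_prop)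
      fun p hp => (pow_pos (ellipticDelta_pos hp.1 p.2) 3).ne')
    fun x hx θ => ((hasDerivAt_ellipticDelta hx θ).inv (ellipticDelta_pos hx θ).ne').congr_deriv ?_
  have := (ellipticDelta_pos hx θ).ne'
  field_simp

theorem hasDerivAt_ellipticE (hk : |k| < 1) (hk0 : k ≠ 0) :
    HasDerivAt ellipticE ((ellipticE k - ellipticK k) / k) k := by
  refine (hasDerivAt_ellipticE_integral hk).congr_deriv ?_
  rw [eq_div_iff hk0, ← intervalIntegral.integral_mul_const, ellipticE_eq_integral_ellipticDelta,
    ellipticK_eq_integral_ellipticDelta, ← intervalIntegral.integral_sub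
      (Continuous.intervalIntegrable (by fun_prop) _ _)
      ((continuous_inv_ellipticDelta hk).intervalIntegrable _ _)]
  refine intervalIntegral.integral_congr fun θ _ => ?_
  have := (ellipticDelta_pos hk θ).ne'
  field_simp
  linear_combination (-1) * ellipticDelta_sq hk.le θ

theorem integral_sin_sq_div_ellipticDelta_pow_three (hk : |k| < 1) :
    k ^ 2 * (1 - k ^ 2) * ∫ θ in (0:ℝ)..π / 2, sin θ ^ 2 / ellipticDelta k θ ^ 3 =
      ellipticE k - (1 - k ^ 2) * ellipticK k := by
  have hpow : ∀ θ, ellipticDelta k θ ^ 3 ≠ 0 := fun θ => pow_ne_zero 3 (ellipticDelta_pos hk θ).ne'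
  have hΔ : Continuous (ellipticDelta k) := by fun_prop
  have hinv := continuous_inv_ellipticDelta hk
  have hg : Continuous fun θ => (1 - 2 * sin θ ^ 2 + k ^ 2 * sin θ ^ 4) / ellipticDelta k θ ^ 3 :=
    Continuous.div (by fun_prop) (by fun_prop) hpow
  have hboundary :
      ∫ θ in (0:ℝ)..π / 2, (1 - 2 * sin θ ^ 2 + k ^ 2 * sin θ ^ 4) / ellipticDelta k θ ^ 3 = 0 := by
    rw [intervalIntegral.integral_eq_sub_of_hasDerivAt
      (fun θ _ => hasDerivAt_sin_mul_cos_div_ellipticDelta hk θ) (hg.intervalIntegrable _ _)]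
    simp
  calc k ^ 2 * (1 - k ^ 2) * ∫ θ in (0:ℝ)..π / 2, sin θ ^ 2 / ellipticDelta k θ ^ 3
      = ∫ θ in (0:ℝ)..π / 2, (ellipticDelta k θ - (1 - k ^ 2) * (ellipticDelta k θ)⁻¹ -
          k ^ 2 * ((1 - 2 * sin θ ^ 2 + k ^ 2 * sin θ ^ 4) / ellipticDelta k θ ^ 3)) := by
        rw [← intervalIntegral.integral_const_mul]
        refine intervalIntegral.integral_congr fun θ _ => ?_
        have := (ellipticDelta_pos hk θ).ne'
        field_simp
        linear_combination (k ^ 2 * sin θ ^ 2 - k ^ 2 - ellipticDelta k θ ^ 2) *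
          ellipticDelta_sq hk.le θ
    _ = ellipticE k - (1 - k ^ 2) * ellipticK k := by
        rw [intervalIntegral.integral_sub, intervalIntegral.integral_sub,
          intervalIntegral.integral_const_mul, intervalIntegral.integral_const_mul, hboundary,
          ellipticE_eq_integral_ellipticDelta, ellipticK_eq_integral_ellipticDelta, mul_zero,
          sub_zero]
        all_goals exact Continuous.intervalIntegrable (by fun_prop) _ _

theorem hasDerivAt_ellipticK (hk : |k| < 1) (hk0 : k ≠ 0) :
    HasDerivAt ellipticK ((ellipticE k - (1 - k ^ 2) * ellipticK k) / (k * (1 - k ^ 2))) k := by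
  have hk2 : 1 - k ^ 2 ≠ 0 := by nlinarith [(sq_lt_one_iff_abs_lt_one k).2 hk]
  refine (hasDerivAt_ellipticK_integral hk).congr_deriv ?_
  simp_rw [mul_div_assoc]
  rw [intervalIntegral.integral_const_mul, ← integral_sin_sq_div_ellipticDelta_pow_three hk]
  field_simp

theorem sqrt_one_sub_sq_mem_Ioo (hk : k ∈ Ioo (0:ℝ) 1) : √(1 - k ^ 2) ∈ Ioo (0:ℝ) 1 :=
  ⟨sqrt_pos.2 (by nlinarith [hk.1, hk.2]), (sqrt_lt' one_pos).2 (by nlinarith [hk.1, hk.2])⟩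

theorem ellipticK_sqrt_one_sub_sq_le (hk : k ∈ Ioo (0:ℝ) 1) :
    ellipticK √(1 - k ^ 2) ≤ π / (2 * k) := by
  have hk' := sqrt_one_sub_sq_mem_Ioo hk
  have := ellipticK_le_div_sqrt_one_sub_sq (abs_lt.2 ⟨by linarith [hk'.1], hk'.2⟩)
  rwa [sq_sqrt (by nlinarith [hk.1, hk.2]), sub_sub_cancel, sqrt_sq hk.1.le] at this

end

noncomputable def legendreCombination (k : ℝ) : ℝ :=
  ellipticE k * ellipticK √(1 - k ^ 2) + ellipticE √(1 - k ^ 2) * ellipticK k -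
    ellipticK k * ellipticK √(1 - k ^ 2)

theorem hasDerivAt_legendreCombination {k : ℝ} (hk : k ∈ Ioo (0:ℝ) 1) :
    HasDerivAt legendreCombination 0 k := by
  have hk' := sqrt_one_sub_sq_mem_Ioo hk
  have habs : ∀ {x : ℝ}, x ∈ Ioo (0:ℝ) 1 → |x| < 1 := fun hx => abs_lt.2 ⟨by linarith [hx.1], hx.2⟩
  have hk2 : 0 < 1 - k ^ 2 := by nlinarith [hk.1, hk.2]
  have hcomp : HasDerivAt (fun x => √(1 - x ^ 2)) (-k / √(1 - k ^ 2)) k := by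
    refine ((hasDerivAt_pow 2 k).const_sub 1).sqrt hk2.ne' |>.congr_deriv ?_
    field_simp
    ring
  have hE := hasDerivAt_ellipticE (habs hk) hk.1.ne'
  have hK := hasDerivAt_ellipticK (habs hk) hk.1.ne'
  have hE' := (hasDerivAt_ellipticE (habs hk') hk'.1.ne').comp k hcomp
  have hK' := (hasDerivAt_ellipticK (habs hk') hk'.1.ne').comp k hcomp
  refine (((hE.mul hK').add (hE'.mul hK)).sub (hK.mul hK')).congr_deriv ?_
  have := hk'.1.ne'
  have := hk.1.ne'
  field_simp
  simp only [Function.comp_apply, sq_sqrt hk2.le]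
  ring

theorem legendreCombination_eq_of_mem_Ioo {x y : ℝ} (hx : x ∈ Ioo (0:ℝ) 1)
    (hy : y ∈ Ioo (0:ℝ) 1) : legendreCombination x = legendreCombination y :=
  isOpen_Ioo.is_const_of_deriv_eq_zero isPreconnected_Ioo
    (fun _ hz => (hasDerivAt_legendreCombination hz).differentiableAt.differentiableWithinAt)
    (fun _ hz => (hasDerivAt_legendreCombination hz).deriv) hx hy

theorem tendsto_legendreCombination_nhdsGT_zero :
    Tendsto legendreCombination (𝓝[>] 0) (𝓝 (π / 2)) := by
  have hK : Tendsto ellipticK (𝓝[>] 0) (𝓝 (π / 2)) := by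
    rw [← ellipticK_zero]
    exact (hasDerivAt_ellipticK_integral (by simp)).continuousAt.tendsto.mono_left
      nhdsWithin_le_nhds
  have hE' : Tendsto (fun x => ellipticE √(1 - x ^ 2)) (𝓝[>] 0) (𝓝 1) := by
    have hk' : Tendsto (fun x : ℝ => √(1 - x ^ 2)) (𝓝[>] 0) (𝓝 1) := by
      simpa using ((by fun_prop : Continuous fun x : ℝ => √(1 - x ^ 2)).tendsto 0).mono_left
        nhdsWithin_le_nhds
    have := (continuous_ellipticE.tendsto 1).comp hk'
    rwa [ellipticE_one] at this
  have hprod : Tendsto (fun x => (ellipticE x - ellipticK x) * ellipticK √(1 - x ^ 2))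
      (𝓝[>] 0) (𝓝 0) := by
    refine squeeze_zero_norm' (a := fun x => π / 2 * (x * ellipticK x)) ?_ ?_
    · filter_upwards [Ioo_mem_nhdsGT one_pos] with x hx
      calc ‖(ellipticE x - ellipticK x) * ellipticK √(1 - x ^ 2)‖
          = |ellipticE x - ellipticK x| * ellipticK √(1 - x ^ 2) := by
            rw [norm_mul, norm_eq_abs, norm_of_nonneg (ellipticK_nonneg _)]
        _ ≤ x ^ 2 * ellipticK x * (π / (2 * x)) :=
            mul_le_mul (abs_ellipticE_sub_ellipticK_le (abs_lt.2 ⟨by linarith [hx.1], hx.2⟩))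
              (ellipticK_sqrt_one_sub_sq_le hx) (ellipticK_nonneg _)
              (by nlinarith [ellipticK_nonneg x])
        _ = π / 2 * (x * ellipticK x) := by field_simp [hx.1.ne']
    · simpa using ((tendsto_nhdsWithin_of_tendsto_nhds tendsto_id).mul hK).const_mul (π / 2)
  have := hprod.add (hE'.mul hK)
  rw [zero_add, one_mul] at this
  refine this.congr fun x => ?_
  unfold legendreCombination
  ring

/-- The Legendre relation for complete elliptic integrals. -/
theorem legendre_relation (k : ℝ) (hk : k ∈ Set.Ioo (0:ℝ) 1) :
    ellipticE k * ellipticK (Real.sqrt (1 - k ^ 2)) +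
      ellipticE (Real.sqrt (1 - k ^ 2)) * ellipticK k -
      ellipticK k * ellipticK (Real.sqrt (1 - k ^ 2)) = π / 2 := by
  change legendreCombination k = π / 2
  refine tendsto_nhds_unique (tendsto_const_nhds.congr' ?_) tendsto_legendreCombination_nhdsGT_zero
  filter_upwards [Ioo_mem_nhdsGT one_pos] with x hx
  exact legendreCombination_eq_of_mem_Ioo hk hx
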